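/- Let f = a + b where: a: ℕ→ℝ is the restriction to positive integers of a C¹ function A: [1,∞)→ℝ such that for every ε>0 there is C_ε with |A'(t)| ≤ C_ε t^{ε−1} for all t ≥ 1; f is essentially bounded (for every ε>0, |f(n)| ≤ C_ε n^ε for all n ≥ 1, and f(m)=0 for m ≤ 0); and there is α ∈ [0,1) such that for every ε>0, |Σ_{n≤x} b(n)| ≤ C_ε x^{α+ε} for all x ≥ 1. Then for every ε>0, uniformly for positive integers N, H with H ≤ N, one has | Σ_{h=1}^{H} Σ_{N<n≤2N} f(n) f(n−h) − H·Σ_{N<x≤2N} a(x)² | ≪_ε N^{ε} ( N^{1/2} J^{1/2} + N^{α} H + H² ), where J = Σ_{N<x≤2N} ( Σ_{x<n≤x+H} b(n) )². -/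

import Mathlib

/-!
Expand `f(n) f(n - h) - a(n)²` as `a(n)(a(n - h) - a(n)) + a(n) b(n - h) + b(n) a(n - h) +
b(n) b(n - h)`. Integrating `|A'(t)| ≪ t^(δ-1)` shows that the variation of `a` between `m ≤ n`
is at most `K (n^δ - m^δ)`. Hence, for each shift `h`, the first term telescopes to `≪ h N^δ · N^δ`,
and partial summation against the partial sums of `b`, which are `≪ N^(α+δ)`, bounds each mixed
term by `≪ N^(α+2δ)`. In the last term, the sum over `h` is the sum of `b` over the window
`(n - H - 1, n - 1]`; once this window lies in `(N, 2N]`, Cauchy–Schwarz bounds the contribution by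
`N^(1/2+δ) J^(1/2)`, and the remaining `O(H)` values of `n` contribute `≪ H N^(α+2δ)`.
Take `δ = ε/2`.
-/

open Finset

theorem abs_sub_le_sub_of_abs_deriv_le {D : Set ℝ} (hD : Convex ℝ D) {f g f' g' : ℝ → ℝ}
    (hf : ∀ x ∈ D, HasDerivAt f (f' x) x) (hg : ∀ x ∈ D, HasDerivAt g (g' x) x)
    (hfg : ∀ x ∈ D, |f' x| ≤ g' x) {s t : ℝ} (hs : s ∈ D) (ht : t ∈ D) (hst : s ≤ t) :
    |f t - f s| ≤ g t - g s := by
  have mono : ∀ F F' : ℝ → ℝ, (∀ x ∈ D, HasDerivAt F (F' x) x) → (∀ x ∈ D, 0 ≤ F' x) →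
      F s ≤ F t := fun F F' hF hF'0 =>
    monotoneOn_of_hasDerivWithinAt_nonneg hD
      (fun x hx => (hF x hx).continuousAt.continuousWithinAt)
      (fun x hx => (hF x (interior_subset hx)).hasDerivWithinAt)
      (fun x hx => hF'0 x (interior_subset hx)) hs ht hst
  have hsub := mono (g - f) (g' - f') (fun x hx => (hg x hx).sub (hf x hx))
    (fun x hx => sub_nonneg.mpr (le_of_abs_le (hfg x hx)))
  have hadd := mono (g + f) (g' + f') (fun x hx => (hg x hx).add (hf x hx))
    (fun x hx => by simp only [Pi.add_apply]; linarith [neg_le_of_abs_le (hfg x hx)])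
  simp only [Pi.sub_apply, Pi.add_apply] at hsub hadd
  exact abs_sub_le_iff.mpr ⟨by linarith, by linarith⟩

theorem abs_sub_le_of_abs_deriv_le_rpow {A A' : ℝ → ℝ} {C δ : ℝ} (hδ : 0 < δ)
    (hA : ∀ t : ℝ, 1 ≤ t → HasDerivAt A (A' t) t)
    (hA' : ∀ t : ℝ, 1 ≤ t → |A' t| ≤ C * t ^ (δ - 1)) {s t : ℝ} (hs : 1 ≤ s) (hst : s ≤ t) :
    |A t - A s| ≤ C / δ * t ^ δ - C / δ * s ^ δ :=
  abs_sub_le_sub_of_abs_deriv_le (convex_Ici 1) hA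
    (fun x hx => (Real.hasDerivAt_rpow_const (Or.inl (by linarith [Set.mem_Ici.mp hx]))).const_mul
      (C / δ))
    (fun x hx => by
      rw [← mul_assoc, div_mul_cancel₀ C hδ.ne']
      exact hA' x hx)
    hs (hs.trans hst) hst

theorem abs_sum_le_card_mul {ι : Type*} (s : Finset ι) (F : ι → ℝ) {c : ℝ}
    (h : ∀ i ∈ s, |F i| ≤ c) : |∑ i ∈ s, F i| ≤ #s * c :=
  (abs_sum_le_sum_abs F s).trans ((sum_le_card_nsmul _ _ _ h).trans_eq (nsmul_eq_mul _ _))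

theorem abs_sum_mul_comp_le {ι κ : Type*} (s : Finset ι) (t : Finset κ) (x : ι → ℝ) (y : κ → ℝ)
    {σ : ι → κ} (hσ : Set.InjOn σ s) (hst : Set.MapsTo σ s t) :
    |∑ i ∈ s, x i * y (σ i)| ≤ √(∑ i ∈ s, x i ^ 2) * √(∑ j ∈ t, y j ^ 2) := by
  classical
  have hy : ∑ i ∈ s, y (σ i) ^ 2 ≤ ∑ j ∈ t, y j ^ 2 := by
    rw [← sum_image (f := fun j => y j ^ 2) hσ]
    exact sum_le_sum_of_subset_of_nonneg (image_subset_iff.mpr hst) fun _ _ _ => sq_nonneg _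
  calc |∑ i ∈ s, x i * y (σ i)| ≤ ∑ i ∈ s, |x i| * |y (σ i)| :=
        (abs_sum_le_sum_abs _ _).trans_eq (sum_congr rfl fun i _ => abs_mul _ _)
    _ ≤ √(∑ i ∈ s, |x i| ^ 2) * √(∑ i ∈ s, |y (σ i)| ^ 2) := Real.sum_mul_le_sqrt_mul_sqrt _ _ _
    _ ≤ √(∑ i ∈ s, x i ^ 2) * √(∑ j ∈ t, y j ^ 2) := by simp only [sq_abs]; gcongr

theorem sum_Ioc_comp_sub (F : ℕ → ℝ) {L R h : ℕ} (hhL : h ≤ L) (hLR : L ≤ R) :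
    ∑ n ∈ Ioc L R, F (n - h) = ∑ m ∈ Ioc (L - h) (R - h), F m := by
  rw [← Nat.sub_add_cancel hhL, ← Nat.sub_add_cancel (hhL.trans hLR), ← map_add_right_Ioc,
    sum_map, Nat.sub_add_cancel hhL, Nat.sub_add_cancel (hhL.trans hLR)]
  simp

theorem sum_Ioc_sub_comp_sub_le (φ : ℕ → ℝ) {L R h : ℕ} (hhL : h ≤ L) (hLR : L ≤ R)
    (hφ0 : ∀ n ∈ Ioc (L - h) L, 0 ≤ φ n) (hφR : ∀ n ∈ Ioc (R - h) R, φ n ≤ φ R) :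
    ∑ n ∈ Ioc L R, (φ n - φ (n - h)) ≤ h * φ R := by
  have hsplit := (sum_Ioc_consecutive φ (Nat.sub_le_sub_right hLR h) (Nat.sub_le R h)).trans
    (sum_Ioc_consecutive φ (Nat.sub_le L h) hLR).symm
  have htop : ∑ n ∈ Ioc (R - h) R, φ n ≤ h * φ R := by
    simpa [Nat.card_Ioc, Nat.sub_sub_self (hhL.trans hLR)] using
      sum_le_card_nsmul _ _ _ hφR
  rw [sum_sub_distrib, sum_Ioc_comp_sub φ hhL hLR]
  linarith [sum_nonneg hφ0]

theorem abs_sum_Ioc_le_of_abs_partialSum_le (b : ℕ → ℝ) {R u v : ℕ} {M : ℝ}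
    (hB : ∀ m, m ≤ R → |∑ k ∈ Ioc 0 m, b k| ≤ M) (huv : u ≤ v) (hvR : v ≤ R) :
    |∑ k ∈ Ioc u v, b k| ≤ 2 * M := by
  have hsplit := sum_Ioc_consecutive b (Nat.zero_le u) huv
  rw [show ∑ k ∈ Ioc u v, b k = ∑ k ∈ Ioc 0 v, b k - ∑ k ∈ Ioc 0 u, b k by linarith]
  linarith [abs_sub (∑ k ∈ Ioc 0 v, b k) (∑ k ∈ Ioc 0 u, b k), hB v hvR, hB u (huv.trans hvR)]

def windowSum (b : ℕ → ℝ) (H x : ℕ) : ℝ := ∑ n ∈ Ioc x (x + H), b n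

theorem sum_Icc_comp_sub_eq_windowSum (b : ℕ → ℝ) {H n : ℕ} (hHn : H < n) :
    ∑ h ∈ Icc 1 H, b (n - h) = windowSum b H (n - (H + 1)) :=
  sum_nbij' (fun h => n - h) (fun k => n - k)
    (fun h hh => by simp only [mem_Icc] at hh; simp only [mem_Ioc]; omega)
    (fun k hk => by simp only [mem_Ioc] at hk; simp only [mem_Icc]; omega)
    (fun h hh => by simp only [mem_Icc] at hh; omega)
    (fun k hk => by simp only [mem_Ioc] at hk; omega)
    (fun _ _ => rfl)

theorem sum_sum_mul_sub_eq (f a b : ℕ → ℝ) (hab : ∀ n, f n = a n + b n) (s t : Finset ℕ) :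
    ∑ h ∈ s, ∑ n ∈ t, f n * f (n - h) - #s * ∑ n ∈ t, a n ^ 2 =
      ∑ h ∈ s, ∑ n ∈ t, a n * (a (n - h) - a n) + ∑ h ∈ s, ∑ n ∈ t, a n * b (n - h)
        + ∑ h ∈ s, ∑ n ∈ t, b n * a (n - h) + ∑ h ∈ s, ∑ n ∈ t, b n * b (n - h) := by
  have expand : ∀ h n, f n * f (n - h) = a n ^ 2 + (a n * (a (n - h) - a n)
      + a n * b (n - h) + b n * a (n - h) + b n * b (n - h)) := fun h n => by
    rw [hab, hab]; ring
  simp only [expand, sum_add_distrib, sum_const, nsmul_eq_mul]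
  ring

-- Unlike `Finset.sum_Ioc_by_parts`, the partial sums start at `L`, so only the values of `g`
-- on `(L, R]` enter.
theorem sum_Ioc_mul_eq_sub_sum_Ioo (g b : ℕ → ℝ) {L R : ℕ} (hLR : L ≤ R) :
    ∑ n ∈ Ioc L R, g n * b n =
      g R * ∑ k ∈ Ioc L R, b k - ∑ n ∈ Ioo L R, (g (n + 1) - g n) * ∑ k ∈ Ioc L n, b k := by
  induction R, hLR using Nat.le_induction with
  | base => simp
  | succ R hLR ih =>
    simp only [sum_Ioc_succ_top hLR, ih]
    rcases hLR.eq_or_lt with rfl | hlt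
    · simp [← Ico_add_one_left_eq_Ioo]
    · rw [← Ico_add_one_left_eq_Ioo, ← Ico_add_one_left_eq_Ioo,
        sum_Ico_succ_top (by omega : L + 1 ≤ R)]
      ring

theorem abs_sum_Ioc_mul_le (g b ψ : ℕ → ℝ) {L R : ℕ} {M : ℝ} (hLR : L < R)
    (hgψ : ∀ n ∈ Ioo L R, |g (n + 1) - g n| ≤ ψ (n + 1) - ψ n)
    (hb : ∀ m ∈ Ioc L R, |∑ k ∈ Ioc L m, b k| ≤ M) :
    |∑ n ∈ Ioc L R, g n * b n| ≤ (|g R| + (ψ R - ψ (L + 1))) * M := by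
  rw [sum_Ioc_mul_eq_sub_sum_Ioo g b hLR.le]
  have hvar : |∑ n ∈ Ioo L R, (g (n + 1) - g n) * ∑ k ∈ Ioc L n, b k| ≤
      (ψ R - ψ (L + 1)) * M :=
    calc _ ≤ ∑ n ∈ Ioo L R, (ψ (n + 1) - ψ n) * M :=
          (abs_sum_le_sum_abs _ _).trans <| sum_le_sum fun n hn => by
            rw [abs_mul]
            exact mul_le_mul (hgψ n hn) (hb n (Ioo_subset_Ioc_self hn)) (abs_nonneg _)
              ((abs_nonneg _).trans (hgψ n hn))
      _ = (ψ R - ψ (L + 1)) * M := by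
          rw [← sum_mul, ← Ico_add_one_left_eq_Ioo, sum_Ico_sub ψ (by omega : L + 1 ≤ R)]
  calc _ ≤ |g R * ∑ k ∈ Ioc L R, b k| + |∑ n ∈ Ioo L R, (g (n + 1) - g n) * ∑ k ∈ Ioc L n, b k| :=
        abs_sub _ _
    _ ≤ |g R| * M + (ψ R - ψ (L + 1)) * M := by
        rw [abs_mul]
        exact add_le_add (mul_le_mul_of_nonneg_left (hb R (right_mem_Ioc.mpr hLR)) (abs_nonneg _))
          hvar
    _ = _ := by ring

section DyadicBlock

variable {a b φ : ℕ → ℝ} {N H : ℕ} {u M : ℝ}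

theorem abs_sum_sum_a_mul_a_shift_sub_le (ha : ∀ n, 1 ≤ n → n ≤ 2 * N → |a n| ≤ u)
    (hvar : ∀ m n, 1 ≤ m → m ≤ n → n ≤ 2 * N → |a n - a m| ≤ φ n - φ m)
    (hφ0 : ∀ n, 0 ≤ φ n) (hφ : φ (2 * N) ≤ u) (hHN : H ≤ N) :
    |∑ h ∈ Icc 1 H, ∑ n ∈ Ioc N (2 * N), a n * (a (n - h) - a n)| ≤ u ^ 2 * H ^ 2 := by
  have hu : 0 ≤ u := (hφ0 _).trans hφ
  have per_shift : ∀ h ∈ Icc 1 H,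
      |∑ n ∈ Ioc N (2 * N), a n * (a (n - h) - a n)| ≤ u * (H * u) := by
    intro h hh
    rw [mem_Icc] at hh
    have hφR : ∀ n ∈ Ioc (2 * N - h) (2 * N), φ n ≤ φ (2 * N) := fun n hn => by
      rw [mem_Ioc] at hn
      exact sub_nonneg.mp ((abs_nonneg _).trans (hvar n (2 * N) (by omega) hn.2 le_rfl))
    calc _ ≤ ∑ n ∈ Ioc N (2 * N), u * (φ n - φ (n - h)) :=
          (abs_sum_le_sum_abs _ _).trans <| sum_le_sum fun n hn => by
            rw [mem_Ioc] at hn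
            rw [abs_mul, abs_sub_comm]
            exact mul_le_mul (ha n (by omega) hn.2)
              (hvar (n - h) n (by omega) (Nat.sub_le n h) hn.2) (abs_nonneg _) hu
      _ = u * ∑ n ∈ Ioc N (2 * N), (φ n - φ (n - h)) := (mul_sum _ _ _).symm
      _ ≤ u * (h * φ (2 * N)) := mul_le_mul_of_nonneg_left
          (sum_Ioc_sub_comp_sub_le φ (by omega) (by omega) (fun n _ => hφ0 n) hφR) hu
      _ ≤ u * (H * u) := by
          gcongr
          · exact hφ0 _
          · exact_mod_cast hh.2
  refine (abs_sum_le_card_mul _ _ per_shift).trans_eq ?_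
  rw [Nat.card_Icc, Nat.add_sub_cancel]
  ring

theorem abs_sum_sum_a_mul_b_shift_le (ha : ∀ n, 1 ≤ n → n ≤ 2 * N → |a n| ≤ u)
    (hvar : ∀ m n, 1 ≤ m → m ≤ n → n ≤ 2 * N → |a n - a m| ≤ φ n - φ m)
    (hφ0 : ∀ n, 0 ≤ φ n) (hφ : φ (2 * N) ≤ u)
    (hB : ∀ m, m ≤ 2 * N → |∑ k ∈ Ioc 0 m, b k| ≤ M) (hHN : H ≤ N) :
    |∑ h ∈ Icc 1 H, ∑ n ∈ Ioc N (2 * N), a n * b (n - h)| ≤ 4 * u * M * H := by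
  have hM : 0 ≤ M := (abs_nonneg _).trans (hB 0 (Nat.zero_le _))
  have per_shift : ∀ h ∈ Icc 1 H, |∑ n ∈ Ioc N (2 * N), a n * b (n - h)| ≤ 4 * u * M := by
    intro h hh
    rw [mem_Icc] at hh
    calc _ ≤ (|a (2 * N)| + (φ (2 * N) - φ (N + 1))) * (2 * M) :=
          abs_sum_Ioc_mul_le a (fun n => b (n - h)) φ (by omega)
            (fun n hn => by rw [mem_Ioo] at hn; exact hvar n (n + 1) (by omega) (by omega) hn.2)
            (fun m hm => by
              rw [mem_Ioc] at hm
              rw [sum_Ioc_comp_sub b (by omega) hm.1.le]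
              exact abs_sum_Ioc_le_of_abs_partialSum_le b hB (by omega) (by omega))
      _ ≤ (u + u) * (2 * M) := by
          gcongr
          · exact ha _ (by omega) le_rfl
          · linarith [hφ0 (N + 1)]
      _ = 4 * u * M := by ring
  refine (abs_sum_le_card_mul _ _ per_shift).trans_eq ?_
  rw [Nat.card_Icc, Nat.add_sub_cancel]
  ring

theorem abs_sum_sum_b_mul_a_shift_le (ha : ∀ n, 1 ≤ n → n ≤ 2 * N → |a n| ≤ u)
    (hvar : ∀ m n, 1 ≤ m → m ≤ n → n ≤ 2 * N → |a n - a m| ≤ φ n - φ m)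
    (hφ0 : ∀ n, 0 ≤ φ n) (hφ : φ (2 * N) ≤ u)
    (hB : ∀ m, m ≤ 2 * N → |∑ k ∈ Ioc 0 m, b k| ≤ M) (hHN : H ≤ N) :
    |∑ h ∈ Icc 1 H, ∑ n ∈ Ioc N (2 * N), b n * a (n - h)| ≤ 4 * u * M * H := by
  have hM : 0 ≤ M := (abs_nonneg _).trans (hB 0 (Nat.zero_le _))
  have per_shift : ∀ h ∈ Icc 1 H, |∑ n ∈ Ioc N (2 * N), b n * a (n - h)| ≤ 4 * u * M := by
    intro h hh
    rw [mem_Icc] at hh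
    simp_rw [mul_comm (b _)]
    calc _ ≤ (|a (2 * N - h)| + (φ (2 * N - h) - φ (N + 1 - h))) * (2 * M) :=
          abs_sum_Ioc_mul_le (fun n => a (n - h)) b (fun n => φ (n - h)) (by omega)
            (fun n hn => by
              rw [mem_Ioo] at hn
              exact hvar (n - h) (n + 1 - h) (by omega) (by omega) (by omega))
            (fun m hm => by
              rw [mem_Ioc] at hm
              exact abs_sum_Ioc_le_of_abs_partialSum_le b hB hm.1.le hm.2)
      _ ≤ (u + u) * (2 * M) := by
          have hφle := sub_nonneg.mp
            ((abs_nonneg _).trans (hvar (2 * N - h) (2 * N) (by omega) (by omega) le_rfl))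
          gcongr
          · exact ha _ (by omega) (by omega)
          · linarith [hφ0 (N + 1 - h)]
      _ = 4 * u * M := by ring
  refine (abs_sum_le_card_mul _ _ per_shift).trans_eq ?_
  rw [Nat.card_Icc, Nat.add_sub_cancel]
  ring

theorem abs_sum_mul_windowSum_short_le (hb : ∀ n, 1 ≤ n → n ≤ 2 * N → |b n| ≤ u)
    (hB : ∀ m, m ≤ 2 * N → |∑ k ∈ Ioc 0 m, b k| ≤ M) (hH : 0 < H) (hHN : H ≤ N)
    {K : ℕ} (hK : K ≤ 2 * N) (hKH : K ≤ N + H + 1) :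
    |∑ n ∈ Ioc N K, b n * windowSum b H (n - (H + 1))| ≤ 4 * u * M * H := by
  have hu : 0 ≤ u := (abs_nonneg _).trans (hb 1 le_rfl (by omega))
  have hM : 0 ≤ M := (abs_nonneg _).trans (hB 0 (Nat.zero_le _))
  calc _ ≤ #(Ioc N K) * (u * (2 * M)) := abs_sum_le_card_mul _ _ fun n hn => by
        rw [mem_Ioc] at hn
        rw [abs_mul]
        exact mul_le_mul (hb n (by omega) (by omega))
          (abs_sum_Ioc_le_of_abs_partialSum_le b hB (by omega) (by omega)) (abs_nonneg _) hu
    _ ≤ (2 * H) * (u * (2 * M)) := by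
        gcongr
        rw [Nat.card_Ioc]
        exact_mod_cast (by omega : K - N ≤ 2 * H)
    _ = 4 * u * M * H := by ring

theorem abs_sum_mul_windowSum_le_sqrt (hb : ∀ n, 1 ≤ n → n ≤ 2 * N → |b n| ≤ u) (hu : 0 ≤ u) :
    |∑ n ∈ Ioc (N + H + 1) (2 * N), b n * windowSum b H (n - (H + 1))| ≤
      u * √N * √(∑ x ∈ Ioc N (2 * N), windowSum b H x ^ 2) := by
  have hb2 : ∑ n ∈ Ioc (N + H + 1) (2 * N), b n ^ 2 ≤ N * u ^ 2 :=
    calc _ ≤ #(Ioc (N + H + 1) (2 * N)) • u ^ 2 := sum_le_card_nsmul _ _ _ fun n hn => by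
          rw [mem_Ioc] at hn
          rw [← sq_abs]
          exact pow_le_pow_left₀ (abs_nonneg _) (hb n (by omega) hn.2) 2
      _ ≤ N * u ^ 2 := by
          rw [nsmul_eq_mul, Nat.card_Ioc]
          gcongr
          exact_mod_cast (by omega : 2 * N - (N + H + 1) ≤ N)
  calc _ ≤ √(∑ n ∈ Ioc (N + H + 1) (2 * N), b n ^ 2) *
        √(∑ x ∈ Ioc N (2 * N), windowSum b H x ^ 2) :=
        abs_sum_mul_comp_le _ _ _ _
          (fun n hn m hm h => by simp only [coe_Ioc, Set.mem_Ioc] at hn hm h; omega)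
          (fun n hn => by simp only [coe_Ioc, Set.mem_Ioc] at hn ⊢; omega)
    _ ≤ √(N * u ^ 2) * √(∑ x ∈ Ioc N (2 * N), windowSum b H x ^ 2) := by gcongr
    _ = u * √N * √(∑ x ∈ Ioc N (2 * N), windowSum b H x ^ 2) := by
        rw [Real.sqrt_mul (Nat.cast_nonneg _), Real.sqrt_sq hu]
        ring

theorem abs_sum_sum_b_mul_b_shift_le (hb : ∀ n, 1 ≤ n → n ≤ 2 * N → |b n| ≤ u)
    (hB : ∀ m, m ≤ 2 * N → |∑ k ∈ Ioc 0 m, b k| ≤ M) (hH : 0 < H) (hHN : H ≤ N) :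
    |∑ h ∈ Icc 1 H, ∑ n ∈ Ioc N (2 * N), b n * b (n - h)| ≤
      4 * u * M * H + u * √N * √(∑ x ∈ Ioc N (2 * N), windowSum b H x ^ 2) := by
  have hswap : ∑ h ∈ Icc 1 H, ∑ n ∈ Ioc N (2 * N), b n * b (n - h) =
      ∑ n ∈ Ioc N (2 * N), b n * windowSum b H (n - (H + 1)) := by
    rw [sum_comm]
    refine sum_congr rfl fun n hn => ?_
    rw [mem_Ioc] at hn
    rw [← mul_sum, sum_Icc_comp_sub_eq_windowSum b (by omega)]
  -- For `n > N + H + 1` the window `(n - H - 1, n - 1]` starts inside `(N, 2N]`.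
  set K := min (N + H + 1) (2 * N)
  have hlong : Ioc K (2 * N) = Ioc (N + H + 1) (2 * N) := by
    ext n
    simp only [mem_Ioc]
    omega
  rw [hswap, ← sum_Ioc_consecutive _ (by omega : N ≤ K) (min_le_right _ _), hlong]
  exact (abs_add_le _ _).trans (add_le_add
    (abs_sum_mul_windowSum_short_le hb hB hH hHN (min_le_right _ _) (min_le_left _ _))
    (abs_sum_mul_windowSum_le_sqrt hb ((abs_nonneg _).trans (hb 1 le_rfl (by omega)))))

theorem abs_deviation_le (f : ℕ → ℝ) (hab : ∀ n, f n = a n + b n)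
    (ha : ∀ n, 1 ≤ n → n ≤ 2 * N → |a n| ≤ u)
    (hvar : ∀ m n, 1 ≤ m → m ≤ n → n ≤ 2 * N → |a n - a m| ≤ φ n - φ m)
    (hφ0 : ∀ n, 0 ≤ φ n) (hφ : φ (2 * N) ≤ u) (hb : ∀ n, 1 ≤ n → n ≤ 2 * N → |b n| ≤ u)
    (hB : ∀ m, m ≤ 2 * N → |∑ k ∈ Ioc 0 m, b k| ≤ M) (hH : 0 < H) (hHN : H ≤ N) :
    |(∑ h ∈ Icc 1 H, ∑ n ∈ Ioc N (2 * N), f n * f (n - h))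
        - (H : ℝ) * ∑ x ∈ Ioc N (2 * N), (a x) ^ 2| ≤
      u ^ 2 * H ^ 2 + 12 * u * M * H + u * √N * √(∑ x ∈ Ioc N (2 * N), windowSum b H x ^ 2) := by
  have hdecomp := sum_sum_mul_sub_eq f a b hab (Icc 1 H) (Ioc N (2 * N))
  rw [Nat.card_Icc, Nat.add_sub_cancel] at hdecomp
  rw [hdecomp]
  have e1 := abs_sum_sum_a_mul_a_shift_sub_le ha hvar hφ0 hφ hHN
  have e2 := abs_sum_sum_a_mul_b_shift_le ha hvar hφ0 hφ hB hHN
  have e3 := abs_sum_sum_b_mul_a_shift_le ha hvar hφ0 hφ hB hHN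
  have e4 := abs_sum_sum_b_mul_b_shift_le hb hB hH hHN
  refine (abs_add_le _ _).trans ((add_le_add (abs_add_three _ _ _) le_rfl).trans ?_)
  linarith

end DyadicBlock

-- The hypotheses of the theorem at one exponent `δ`, with a single constant `K`.
structure StableBounds (a b : ℕ → ℝ) (α δ K : ℝ) : Prop where
  abs_a_le : ∀ n : ℕ, 1 ≤ n → |a n| ≤ K * (n : ℝ) ^ δ
  abs_a_sub_le : ∀ m n : ℕ, 1 ≤ m → m ≤ n → |a n - a m| ≤ K * (n : ℝ) ^ δ - K * (m : ℝ) ^ δ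
  abs_b_le : ∀ n : ℕ, 1 ≤ n → |b n| ≤ K * (n : ℝ) ^ δ
  abs_sum_b_le : ∀ m : ℕ, 1 ≤ m → |∑ k ∈ Ioc 0 m, b k| ≤ K * (m : ℝ) ^ (α + δ)

theorem exists_stableBounds (f a b : ℕ → ℝ) (A A' : ℝ → ℝ)
    (hab : ∀ n : ℕ, f n = a n + b n)
    (hAa : ∀ n : ℕ, 1 ≤ n → a n = A n)
    (hderiv : ∀ t : ℝ, 1 ≤ t → HasDerivAt A (A' t) t)
    (hA' : ∀ ε : ℝ, 0 < ε → ∃ C : ℝ, ∀ t : ℝ, 1 ≤ t → |A' t| ≤ C * t ^ (ε - 1))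
    (hfb : ∀ ε : ℝ, 0 < ε → ∃ C : ℝ, ∀ n : ℕ, 1 ≤ n → |f n| ≤ C * (n : ℝ) ^ ε)
    (α : ℝ) (hb : ∀ ε : ℝ, 0 < ε → ∃ C : ℝ, ∀ x : ℝ, 1 ≤ x →
      |∑ n ∈ Icc 1 ⌊x⌋₊, b n| ≤ C * x ^ (α + ε))
    {δ : ℝ} (hδ : 0 < δ) : ∃ K, 0 ≤ K ∧ StableBounds a b α δ K := by
  obtain ⟨Ca, hCa⟩ := hA' δ hδ
  obtain ⟨Cf, hCf⟩ := hfb δ hδ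
  obtain ⟨Cb, hCb⟩ := hb δ hδ
  have hCa0 : 0 ≤ Ca := by simpa using (abs_nonneg _).trans (hCa 1 le_rfl)
  have hCf0 : 0 ≤ Cf := by simpa using (abs_nonneg _).trans (hCf 1 le_rfl)
  have hCb0 : 0 ≤ Cb := by simpa using (abs_nonneg _).trans (hCb 1 le_rfl)
  set c := Ca / δ
  have hc0 : 0 ≤ c := div_nonneg hCa0 hδ.le
  have hvar : ∀ m n : ℕ, 1 ≤ m → m ≤ n → |a n - a m| ≤ c * (n : ℝ) ^ δ - c * (m : ℝ) ^ δ :=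
    fun m n hm hmn => by
      rw [hAa n (hm.trans hmn), hAa m hm]
      exact abs_sub_le_of_abs_deriv_le_rpow hδ hderiv hCa (by exact_mod_cast hm)
        (by exact_mod_cast hmn)
  have ha : ∀ n : ℕ, 1 ≤ n → |a n| ≤ (|a 1| + c) * (n : ℝ) ^ δ := fun n hn => by
    have h1 : (1 : ℝ) ≤ (n : ℝ) ^ δ := Real.one_le_rpow (by exact_mod_cast hn) hδ.le
    have := hvar 1 n le_rfl hn
    rw [Nat.cast_one, Real.one_rpow] at this
    nlinarith [abs_nonneg (a 1), abs_sub_abs_le_abs_sub (a n) (a 1)]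
  refine ⟨|a 1| + c + Cf + Cb, by positivity, fun n hn => ?_, fun m n hm hmn => ?_,
    fun n hn => ?_, fun m hm => ?_⟩
  · exact (ha n hn).trans (mul_le_mul_of_nonneg_right (by linarith) (by positivity))
  · calc |a n - a m| ≤ c * ((n : ℝ) ^ δ - (m : ℝ) ^ δ) := by linarith [hvar m n hm hmn]
      _ ≤ _ := by
          rw [← mul_sub]
          exact mul_le_mul_of_nonneg_right (by linarith [abs_nonneg (a 1)])
            (sub_nonneg.mpr (by gcongr))
  · calc |b n| = |f n - a n| := by rw [hab n, add_sub_cancel_left]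
      _ ≤ |f n| + |a n| := abs_sub _ _
      _ ≤ Cf * (n : ℝ) ^ δ + (|a 1| + c) * (n : ℝ) ^ δ := add_le_add (hCf n hn) (ha n hn)
      _ ≤ _ := by nlinarith [Real.rpow_nonneg (Nat.cast_nonneg n) δ]
  · have := hCb m (by exact_mod_cast hm)
    rw [Nat.floor_natCast] at this
    rw [← Icc_add_one_left_eq_Ioc]
    exact this.trans (mul_le_mul_of_nonneg_right (by linarith [abs_nonneg (a 1)]) (by positivity))

theorem abs_deviation_le_of_stableBounds {f a b : ℕ → ℝ} {α δ K : ℝ}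
    (hab : ∀ n, f n = a n + b n) (hK : StableBounds a b α δ K) (hK0 : 0 ≤ K) (hδ : 0 < δ)
    (hα : 0 ≤ α) {N H : ℕ} (hH : 0 < H) (hHN : H ≤ N) :
    |(∑ h ∈ Icc 1 H, ∑ n ∈ Ioc N (2 * N), f n * f (n - h))
        - (H : ℝ) * ∑ x ∈ Ioc N (2 * N), (a x) ^ 2| ≤
      (K * (2 * N) ^ δ) ^ 2 * H ^ 2 + 12 * (K * (2 * N) ^ δ) * (K * (2 * N) ^ (α + δ)) * H
        + K * (2 * N) ^ δ * √N * √(∑ x ∈ Ioc N (2 * N), windowSum b H x ^ 2) := by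
  have hle : ∀ n : ℕ, n ≤ 2 * N → (n : ℝ) ≤ 2 * N := fun n hn => by exact_mod_cast hn
  refine abs_deviation_le f hab (φ := fun n => K * (n : ℝ) ^ δ)
    (fun n hn hn' => (hK.abs_a_le n hn).trans (by gcongr; exact hle n hn'))
    (fun m n hm hmn _ => hK.abs_a_sub_le m n hm hmn) (fun n => by positivity)
    (by push_cast; exact le_rfl)
    (fun n hn hn' => (hK.abs_b_le n hn).trans (by gcongr; exact hle n hn'))
    (fun m hm => ?_) hH hHN
  rcases m.eq_zero_or_pos with rfl | hm0
  · simp only [Ioc_self, sum_empty, abs_zero]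
    positivity
  · exact (hK.abs_sum_b_le m hm0).trans (by gcongr; exact hle m hm)

theorem deviation_bound_le_rpow {K α ε N H S : ℝ} (hK : 0 ≤ K) (hε : 0 < ε) (hN : 1 ≤ N)
    (hH : 0 ≤ H) (hS : 0 ≤ S) :
    (K * (2 * N) ^ (ε / 2)) ^ 2 * H ^ 2
        + 12 * (K * (2 * N) ^ (ε / 2)) * (K * (2 * N) ^ (α + ε / 2)) * H
        + K * (2 * N) ^ (ε / 2) * √N * S ≤
      (K ^ 2 * 2 ^ ε + 12 * K ^ 2 * 2 ^ (α + ε) + K * 2 ^ (ε / 2)) * N ^ ε *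
        (N ^ ((1 : ℝ) / 2) * S + N ^ α * H + H ^ 2) := by
  have hN0 : 0 ≤ N := by linarith
  have e1 : ((2 * N) ^ (ε / 2)) ^ 2 = 2 ^ ε * N ^ ε := by
    rw [← Real.rpow_natCast, ← Real.rpow_mul (by positivity), Real.mul_rpow (by norm_num) hN0]
    norm_num
  have e2 : (2 * N) ^ (ε / 2) * (2 * N) ^ (α + ε / 2) = 2 ^ (α + ε) * (N ^ α * N ^ ε) := by
    rw [← Real.rpow_add (by positivity), Real.mul_rpow (by norm_num) hN0,
      ← Real.rpow_add (by positivity)]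
    ring_nf
  have e3 : (2 * N) ^ (ε / 2) * √N ≤ 2 ^ (ε / 2) * (N ^ ε * N ^ ((1 : ℝ) / 2)) := by
    rw [Real.mul_rpow (by norm_num) hN0, Real.sqrt_eq_rpow, mul_assoc]
    gcongr
    linarith
  set X := N ^ ε * H ^ 2
  set Y := N ^ ε * (N ^ α * H)
  set Z := N ^ ε * (N ^ ((1 : ℝ) / 2) * S)
  have hX : 0 ≤ X := by positivity
  have hY : 0 ≤ Y := by positivity
  have hZ : 0 ≤ Z := by positivity
  have hc1 : 0 ≤ K ^ 2 * 2 ^ ε := by positivity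
  have hc2 : 0 ≤ 12 * K ^ 2 * 2 ^ (α + ε) := by positivity
  have hc3 : 0 ≤ K * 2 ^ (ε / 2) := by positivity
  calc _ = K ^ 2 * ((2 * N) ^ (ε / 2)) ^ 2 * H ^ 2
          + 12 * K ^ 2 * ((2 * N) ^ (ε / 2) * (2 * N) ^ (α + ε / 2)) * H
          + K * S * ((2 * N) ^ (ε / 2) * √N) := by ring
    _ ≤ K ^ 2 * (2 ^ ε * N ^ ε) * H ^ 2 + 12 * K ^ 2 * (2 ^ (α + ε) * (N ^ α * N ^ ε)) * H
          + K * S * (2 ^ (ε / 2) * (N ^ ε * N ^ ((1 : ℝ) / 2))) := by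
        rw [e1, e2]
        gcongr
    _ = K ^ 2 * 2 ^ ε * X + 12 * K ^ 2 * 2 ^ (α + ε) * Y + K * 2 ^ (ε / 2) * Z := by ring
    _ ≤ _ := by
        nlinarith [mul_nonneg hc1 (add_nonneg hY hZ), mul_nonneg hc2 (add_nonneg hX hZ),
          mul_nonneg hc3 (add_nonneg hX hY)]

theorem first_generation_deviation_bound_general
    (f a b : ℕ → ℝ) (A A' : ℝ → ℝ)
    (hab : ∀ n : ℕ, f n = a n + b n)
    (hAa : ∀ n : ℕ, 1 ≤ n → a n = A n)
    (hderiv : ∀ t : ℝ, 1 ≤ t → HasDerivAt A (A' t) t)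
    (hA' : ∀ ε : ℝ, 0 < ε → ∃ C : ℝ, ∀ t : ℝ, 1 ≤ t → |A' t| ≤ C * t ^ (ε - 1))
    (hfb : ∀ ε : ℝ, 0 < ε → ∃ C : ℝ, ∀ n : ℕ, 1 ≤ n → |f n| ≤ C * (n : ℝ) ^ ε)
    (α : ℝ) (hα0 : 0 ≤ α)
    (hb : ∀ ε : ℝ, 0 < ε → ∃ C : ℝ, ∀ x : ℝ, 1 ≤ x →
      |∑ n ∈ Icc 1 ⌊x⌋₊, b n| ≤ C * x ^ (α + ε)) :
    ∀ ε : ℝ, 0 < ε → ∃ C : ℝ, ∀ N H : ℕ, 0 < N → 0 < H → H ≤ N →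
      |(∑ h ∈ Icc 1 H, ∑ n ∈ Ioc N (2 * N), f n * f (n - h))
          - (H : ℝ) * ∑ x ∈ Ioc N (2 * N), (a x) ^ 2|
        ≤ C * (N : ℝ) ^ ε *
          ((N : ℝ) ^ ((1 : ℝ) / 2) *
              Real.sqrt (∑ x ∈ Ioc N (2 * N), (∑ n ∈ Ioc x (x + H), b n) ^ 2)
            + (N : ℝ) ^ α * H + (H : ℝ) ^ 2) := by
  intro ε hε
  obtain ⟨K, hK0, hK⟩ :=
    exists_stableBounds f a b A A' hab hAa hderiv hA' hfb α hb (half_pos hε)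
  refine ⟨K ^ 2 * 2 ^ ε + 12 * K ^ 2 * 2 ^ (α + ε) + K * 2 ^ (ε / 2),
    fun N H _ hH hHN => ?_⟩
  exact (abs_deviation_le_of_stableBounds hab hK hK0 (half_pos hε) hα0 hH hHN).trans
    (deviation_bound_le_rpow hK0 hε (Nat.one_le_cast.mpr (hH.trans_le hHN)) (Nat.cast_nonneg H)
      (Real.sqrt_nonneg _))

theorem first_generation_deviation_bound
    (f a b : ℕ → ℝ) (A A' : ℝ → ℝ)
    (hab : ∀ n : ℕ, f n = a n + b n)
    (hAa : ∀ n : ℕ, 1 ≤ n → a n = A n)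
    (hderiv : ∀ t : ℝ, 1 ≤ t → HasDerivAt A (A' t) t)
    (hA'cont : ContinuousOn A' (Set.Ici 1))
    (hA' : ∀ ε : ℝ, 0 < ε → ∃ C : ℝ, ∀ t : ℝ, 1 ≤ t → |A' t| ≤ C * t ^ (ε - 1))
    (hf0 : f 0 = 0)
    (hfb : ∀ ε : ℝ, 0 < ε → ∃ C : ℝ, ∀ n : ℕ, 1 ≤ n → |f n| ≤ C * (n : ℝ) ^ ε)
    (α : ℝ) (hα0 : 0 ≤ α) (hα1 : α < 1)
    (hb : ∀ ε : ℝ, 0 < ε → ∃ C : ℝ, ∀ x : ℝ, 1 ≤ x →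
      |∑ n ∈ Icc 1 ⌊x⌋₊, b n| ≤ C * x ^ (α + ε)) :
    ∀ ε : ℝ, 0 < ε → ∃ C : ℝ, ∀ N H : ℕ, 0 < N → 0 < H → H ≤ N →
      |(∑ h ∈ Icc 1 H, ∑ n ∈ Ioc N (2 * N), f n * f (n - h))
          - (H : ℝ) * ∑ x ∈ Ioc N (2 * N), (a x) ^ 2|
        ≤ C * (N : ℝ) ^ ε *
          ((N : ℝ) ^ ((1 : ℝ) / 2) *
              Real.sqrt (∑ x ∈ Ioc N (2 * N), (∑ n ∈ Ioc x (x + H), b n) ^ 2)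
            + (N : ℝ) ^ α * H + (H : ℝ) ^ 2) :=
  first_generation_deviation_bound_general f a b A A' hab hAa hderiv hA' hfb α hα0 hb
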